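/- arXiv:2111.13335 — 2 statements merged into one kernel-verified Lean document; each statement's English description precedes it below -/
import Mathlib

section
/- Let θ be an irrational real number and let φ be the irrational linear flow on the torus 𝕋² := AddCircle (1:ℝ) × AddCircle (1:ℝ) given by φ t (x, y) = (x + t, y + θ·t) (where t and θ·t are reduced modulo 1). Then φ has time-reversal symmetric limit sets; in fact α(p) = ω(p) = 𝕋² for every point p. -/
open Set Topology

/-- The ω-limit set of a point `x` under a flow `φ`:
`ω(x) := ⋂_{n ∈ ℝ} closure {φ t x | t > n}`. -/
def Flow.omegaSet {S : Type*} [TopologicalSpace S] (φ : Flow ℝ S) (x : S) : Set S :=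
  ⋂ n : ℝ, closure {y | ∃ t : ℝ, n < t ∧ φ t x = y}

/-- The α-limit set of a point `x` under a flow `φ`:
`α(x) := ⋂_{n ∈ ℝ} closure {φ t x | t < n}`. -/
def Flow.alphaSet {S : Type*} [TopologicalSpace S] (φ : Flow ℝ S) (x : S) : Set S :=
  ⋂ n : ℝ, closure {y | ∃ t : ℝ, t < n ∧ φ t x = y}

/-- A set is invariant if it is a union of orbits. -/
def Flow.IsInvariantSet {S : Type*} [TopologicalSpace S] (φ : Flow ℝ S) (A : Set S) : Prop :=
  ∀ x ∈ A, ∀ t : ℝ, φ t x ∈ A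

/-- A point is singular if it is fixed by the flow. -/
def Flow.IsSingularPt {S : Type*} [TopologicalSpace S] (φ : Flow ℝ S) (x : S) : Prop :=
  ∀ t : ℝ, φ t x = x

/-- A point is periodic if it is not singular but is fixed by some positive time map. -/
def Flow.IsPeriodicPt {S : Type*} [TopologicalSpace S] (φ : Flow ℝ S) (x : S) : Prop :=
  ¬ φ.IsSingularPt x ∧ ∃ T : ℝ, 0 < T ∧ φ T x = x

/-- A point is closed if it is singular or periodic. -/
def Flow.IsClosedPt {S : Type*} [TopologicalSpace S] (φ : Flow ℝ S) (x : S) : Prop :=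
  φ.IsSingularPt x ∨ φ.IsPeriodicPt x

/-- A point is recurrent if it belongs to its ω-limit set or to its α-limit set. -/
def Flow.IsRecurrentPt {S : Type*} [TopologicalSpace S] (φ : Flow ℝ S) (x : S) : Prop :=
  x ∈ φ.omegaSet x ∪ φ.alphaSet x

/-- The orbit of a point under a flow. -/
def Flow.flowOrbit {S : Type*} [TopologicalSpace S] (φ : Flow ℝ S) (x : S) : Set S :=
  {y | ∃ t : ℝ, φ t x = y}

/-- A flow has time-reversal symmetric limit sets if `α(x) = ω(x)` for every point `x`. -/
def Flow.HasSymmetricLimitSets {S : Type*} [TopologicalSpace S] (φ : Flow ℝ S) : Prop :=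
  ∀ x : S, φ.alphaSet x = φ.omegaSet x

/-- A limit cycle is a periodic orbit which is the ω-limit or α-limit set of a point
outside of it. -/
def Flow.IsLimitCycle {S : Type*} [TopologicalSpace S] (φ : Flow ℝ S) (γ : Set S) : Prop :=
  (∃ z : S, φ.IsPeriodicPt z ∧ γ = φ.flowOrbit z) ∧
    ∃ y ∉ γ, φ.omegaSet y = γ ∨ φ.alphaSet y = γ

/-- A subset of a topological space is an open annulus if it is open and homeomorphic to
`(0,1) × S¹`. -/
def IsOpenAnnulus {S : Type*} [TopologicalSpace S] (U : Set S) : Prop :=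
  IsOpen U ∧ Nonempty (↥U ≃ₜ (Set.Ioo (0:ℝ) 1 × AddCircle (1:ℝ)))

/-- A subset of a topological space is an open disk if it is open and homeomorphic to
the open unit ball in `ℝ²`. -/
def IsOpenDisk {S : Type*} [TopologicalSpace S] (U : Set S) : Prop :=
  IsOpen U ∧ Nonempty (↥U ≃ₜ ↥(Metric.ball (0 : EuclideanSpace ℝ (Fin 2)) 1))

/-- The torus `𝕋² = ℝ/ℤ × ℝ/ℤ`. -/
abbrev Torus2 : Type := AddCircle (1:ℝ) × AddCircle (1:ℝ)

/-! Flowing for an integer time `k` translates the torus by `k • (0, θ)`. To reach a target `q`,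
first flow for a time `s` that brings the first coordinate to `q.1`; the points at times `s ± k`,
`k ∈ ℕ`, then run through the orbit of the rotation by `±θ` on the circle `{q.1} × 𝕋`, which
accumulates at every point since `θ` is irrational. So every `q` is a cluster point of the orbit
both as `t → ∞` and as `t → -∞`. -/

open Filter

theorem AddCircle.mapClusterPt_atTop_nsmul_of_irrational {p θ : ℝ} [Fact (0 < p)]
    (hθ : Irrational (θ / p)) (c : AddCircle p) :
    MapClusterPt c atTop (fun k : ℕ => k • (θ : AddCircle p)) :=
  ((mapClusterPt_atTop_nsmul_tfae c _).out 0 3).mpr (denseRange_zsmul_coe_iff.mpr hθ c)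

namespace Flow

variable {S : Type*} [TopologicalSpace S] (φ : Flow ℝ S) {x q : S}

theorem mem_omegaSet_iff_mapClusterPt : q ∈ φ.omegaSet x ↔ MapClusterPt q atTop (φ · x) := by
  rw [MapClusterPt, (atTop_basis_Ioi.map _).clusterPt_iff_forall_mem_closure, omegaSet,
    mem_iInter]
  simp [image]

theorem mem_alphaSet_iff_mapClusterPt : q ∈ φ.alphaSet x ↔ MapClusterPt q atBot (φ · x) := by
  rw [MapClusterPt, (atBot_basis_Iio.map _).clusterPt_iff_forall_mem_closure, alphaSet,
    mem_iInter]
  simp [image]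

theorem mem_omegaSet_of_mapClusterPt_nat (s : ℝ)
    (h : MapClusterPt q atTop (fun k : ℕ => φ k (φ s x))) : q ∈ φ.omegaSet x := by
  rw [mem_omegaSet_iff_mapClusterPt]
  refine MapClusterPt.of_comp (φ := fun k : ℕ => (k : ℝ) + s)
    (tendsto_atTop_add_const_right _ s tendsto_natCast_atTop_atTop) ?_
  simpa only [Function.comp_def, map_add] using h

theorem mem_alphaSet_of_mapClusterPt_nat (s : ℝ)
    (h : MapClusterPt q atTop (fun k : ℕ => φ (-k) (φ s x))) : q ∈ φ.alphaSet x := by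
  rw [mem_alphaSet_iff_mapClusterPt]
  refine MapClusterPt.of_comp (φ := fun k : ℕ => -(k : ℝ) + s)
    (tendsto_atBot_add_const_right _ s
      (tendsto_neg_atTop_atBot.comp tendsto_natCast_atTop_atTop)) ?_
  simpa only [Function.comp_def, map_add] using h

end Flow

theorem Torus2.mapClusterPt_add_nsmul_of_irrational {θ : ℝ} (hθ : Irrational θ) (z : Torus2)
    (c : AddCircle (1 : ℝ)) :
    MapClusterPt (z + (0, c)) atTop
      (fun k : ℕ => z + k • ((0 : AddCircle (1 : ℝ)), (θ : AddCircle (1 : ℝ)))) := by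
  have hc := AddCircle.mapClusterPt_atTop_nsmul_of_irrational (p := 1) (by rwa [div_one]) c
  simpa only [Function.comp_def, Prod.smul_mk, smul_zero] using
    hc.continuousAt_comp (f := fun w : AddCircle (1 : ℝ) => z + (0, w)) (by fun_prop)

/-- The irrational linear flow `φ t (x, y) = (x + t, y + θ·t)` on the torus, with `θ`
irrational, has time-reversal symmetric limit sets; in fact `α(p) = ω(p) = 𝕋²` for every
point `p`. -/
theorem irrational_flow_hasSymmetricLimitSets
    (θ : ℝ) (hθ : Irrational θ) (φ : Flow ℝ Torus2)
    (hφ : ∀ (t : ℝ) (p : Torus2),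
      φ t p = (p.1 + (t : AddCircle (1:ℝ)), p.2 + ((θ * t : ℝ) : AddCircle (1:ℝ)))) :
    ∀ p : Torus2, φ.alphaSet p = φ.omegaSet p ∧ φ.omegaSet p = Set.univ := by
  have hφ_int (k : ℤ) (z : Torus2) :
      φ k z = z + k • ((0 : AddCircle (1 : ℝ)), (θ : AddCircle (1 : ℝ))) := by
    have hk : ((k : ℝ) : AddCircle (1 : ℝ)) = 0 := (AddCircle.coe_eq_zero_iff 1).mpr ⟨k, by simp⟩
    rw [hφ, hk, mul_comm, ← zsmul_eq_mul, AddCircle.coe_zsmul]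
    ext <;> simp
  have hφ_nat (k : ℕ) (z : Torus2) :
      φ k z = z + k • ((0 : AddCircle (1 : ℝ)), (θ : AddCircle (1 : ℝ))) := by
    simpa using hφ_int k z
  have hφ_neg_nat (k : ℕ) (z : Torus2) :
      φ (-k) z = z + k • ((0 : AddCircle (1 : ℝ)), ((-θ : ℝ) : AddCircle (1 : ℝ))) := by
    simpa [AddCircle.coe_neg] using hφ_int (-k) z
  intro p
  suffices h : ∀ q, q ∈ φ.alphaSet p ∧ q ∈ φ.omegaSet p by
    constructor <;> ext q <;> simp [h]
  intro q
  obtain ⟨s, hs⟩ := QuotientAddGroup.mk_surjective (q.1 - p.1)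
  obtain ⟨c, rfl⟩ : ∃ c, φ s p + (0, c) = q := ⟨q.2 - (φ s p).2, by ext <;> simp [hφ, hs]⟩
  constructor
  · refine φ.mem_alphaSet_of_mapClusterPt_nat s ?_
    simp only [hφ_neg_nat]
    exact Torus2.mapClusterPt_add_nsmul_of_irrational hθ.neg _ _
  · refine φ.mem_omegaSet_of_mapClusterPt_nat s ?_
    simp only [hφ_nat]
    exact Torus2.mapClusterPt_add_nsmul_of_irrational hθ _ _
end

section
/- Let S be a compact metric space, A ⊆ S a closed subset, T a connected component of the complement S \ A, and A₁, A₂ two distinct connected components of A. Then there exist disjoint open subsets U₁ and U₂ of S such that A₁ ⊆ U₁, A₂ ⊆ U₂, A ⊆ U₁ ∪ U₂, and the set difference T \ (U₁ ∪ U₂) is compact. -/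
open Set Topology

/-!
Components of a compact Hausdorff space are intersections of clopen sets, so some clopen subset
of `A` contains `A₁` and misses `A₂`. It splits `A` into two disjoint compact sets, which have
disjoint open neighbourhoods `U₁ ⊇ A₁` and `U₂ ⊇ A₂` covering `A`. Finally, a component `T` of
`Aᶜ` is closed in `Aᶜ`, so `closure T \ (U₁ ∪ U₂) ⊆ closure T ∩ Aᶜ ⊆ T`; hence `T \ (U₁ ∪ U₂)`
is closed in the compact space `S`.
-/

section Components

variable {X : Type*} [TopologicalSpace X]

theorem closure_connectedComponentIn_inter_subset (F : Set X) (x : X) :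
    closure (connectedComponentIn F x) ∩ F ⊆ connectedComponentIn F x := by
  by_cases hx : x ∈ F
  · exact (isPreconnected_connectedComponentIn.subset_closure
      (subset_inter subset_closure (connectedComponentIn_subset F x))
      inter_subset_left).subset_connectedComponentIn
      ⟨subset_closure (mem_connectedComponentIn hx), hx⟩ inter_subset_right
  · simp [connectedComponentIn_eq_empty hx]

theorem IsOpen.isClosed_connectedComponentIn_diff {F U : Set X} (hU : IsOpen U)
    (hFU : Fᶜ ⊆ U) (x : X) : IsClosed (connectedComponentIn F x \ U) := by
  refine isClosed_of_closure_subset fun y hy => ?_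
  have hyU : y ∉ U := closure_minimal (fun _ h => h.2) hU.isClosed_compl hy
  have hyC : y ∈ closure (connectedComponentIn F x) := closure_mono sdiff_subset hy
  exact ⟨closure_connectedComponentIn_inter_subset F x
    ⟨hyC, compl_subset_comm.mp hFU hyU⟩, hyU⟩

theorem exists_isClopen_mem_notMem_of_notMem_connectedComponent [T2Space X] [CompactSpace X]
    {x y : X} (hy : y ∉ connectedComponent x) : ∃ Z : Set X, IsClopen Z ∧ x ∈ Z ∧ y ∉ Z := by
  rw [connectedComponent_eq_iInter_isClopen, mem_iInter] at hy
  obtain ⟨⟨Z, hZ, hxZ⟩, hyZ⟩ := not_forall.mp hy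
  exact ⟨Z, hZ, hxZ, hyZ⟩

theorem IsCompact.exists_partition_separating_connectedComponentIn [T2Space X] {A : Set X}
    (hA : IsCompact A) {a₁ a₂ : X} (ha₁ : a₁ ∈ A) (ha₂ : a₂ ∈ A)
    (hne : connectedComponentIn A a₁ ≠ connectedComponentIn A a₂) :
    ∃ K₁ K₂ : Set X, IsCompact K₁ ∧ IsCompact K₂ ∧ Disjoint K₁ K₂ ∧ A ⊆ K₁ ∪ K₂ ∧
      connectedComponentIn A a₁ ⊆ K₁ ∧ connectedComponentIn A a₂ ⊆ K₂ := by
  have : CompactSpace A := isCompact_iff_compactSpace.mp hA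
  rw [connectedComponentIn_eq_image ha₁, connectedComponentIn_eq_image ha₂] at hne ⊢
  have hsep : (⟨a₂, ha₂⟩ : A) ∉ connectedComponent ⟨a₁, ha₁⟩ := fun h =>
    hne (by rw [connectedComponent_eq h])
  obtain ⟨Z, hZ, ha₁Z, ha₂Z⟩ := exists_isClopen_mem_notMem_of_notMem_connectedComponent hsep
  refine ⟨(↑) '' Z, (↑) '' Zᶜ, hZ.isClosed.isCompact.image continuous_subtype_val,
    hZ.compl.isClosed.isCompact.image continuous_subtype_val,
    (disjoint_image_iff Subtype.val_injective).mpr disjoint_compl_right, ?_,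
    image_mono (hZ.connectedComponent_subset ha₁Z),
    image_mono (hZ.compl.connectedComponent_subset ha₂Z)⟩
  rw [← image_union, union_compl_self, image_univ, Subtype.range_coe]

end Components

/-- Let `S` be a compact metric space, `A ⊆ S` a closed subset, `T` a connected component
of `S \ A`, and `A₁, A₂` two distinct connected components of `A`. Then there are
disjoint open sets `U₁ ⊇ A₁` and `U₂ ⊇ A₂` with `A ⊆ U₁ ∪ U₂` such that `T \ (U₁ ∪ U₂)`
is compact. -/
theorem distinct_components_separated_by_open_sets_compact_core
    {S : Type*} [MetricSpace S] [CompactSpace S]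
    (A : Set S) (hA : IsClosed A)
    (T : Set S) (hT : ∃ x ∈ Aᶜ, connectedComponentIn Aᶜ x = T)
    (a₁ a₂ : S) (ha₁ : a₁ ∈ A) (ha₂ : a₂ ∈ A)
    (hne : connectedComponentIn A a₁ ≠ connectedComponentIn A a₂) :
    ∃ U₁ U₂ : Set S, IsOpen U₁ ∧ IsOpen U₂ ∧ Disjoint U₁ U₂ ∧
      connectedComponentIn A a₁ ⊆ U₁ ∧ connectedComponentIn A a₂ ⊆ U₂ ∧
      A ⊆ U₁ ∪ U₂ ∧ IsCompact (T \ (U₁ ∪ U₂)) := by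
  obtain ⟨K₁, K₂, hK₁, hK₂, hK, hAK, hK₁A, hK₂A⟩ :=
    hA.isCompact.exists_partition_separating_connectedComponentIn ha₁ ha₂ hne
  obtain ⟨U₁, U₂, hU₁, hU₂, hKU₁, hKU₂, hU⟩ := SeparatedNhds.of_isCompact_isCompact hK₁ hK₂ hK
  have hAU : A ⊆ U₁ ∪ U₂ := hAK.trans (union_subset_union hKU₁ hKU₂)
  obtain ⟨x, -, rfl⟩ := hT
  exact ⟨U₁, U₂, hU₁, hU₂, hU, hK₁A.trans hKU₁, hK₂A.trans hKU₂, hAU,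
    ((hU₁.union hU₂).isClosed_connectedComponentIn_diff (by rwa [compl_compl]) x).isCompact⟩
end
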